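/- Let n ≥ 1 and let Ψ be a local symplectomorphism of ω₀ on ℝ^{2n} such that on a neighbourhood of 0: p₁∘Ψ = p₁ and q₁∘Ψ ∈ I₁ = ⟨q₁⟩ (i.e. Ψ preserves the hypersurface {q₁ = 0}). Then q₁∘Ψ = q₁ near 0, all the remaining components pᵢ∘Ψ, qᵢ∘Ψ (i = 2,…,n) are independent of the variables p₁ and q₁, and the map germ B := (p₂∘Ψ, q₂∘Ψ, …, pₙ∘Ψ, qₙ∘Ψ), viewed as a map germ at 0 on ℝ^{2n−2} with coordinates (p₂,q₂,…,pₙ,qₙ), is a local symplectomorphism of the standard symplectic form Σᵢ₌₂ⁿ dpᵢ∧dqᵢ on ℝ^{2n−2}. -/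

import Mathlib

open Filter Topology

noncomputable section

/-- `ℝ^{2n}` with coordinates `(p, q) = (p₁,…,pₙ,q₁,…,qₙ)`. -/
abbrev PQ (n : ℕ) : Type := (Fin n → ℝ) × (Fin n → ℝ)

/-- A smooth germ at `0`: a function which is `C^∞` on some neighbourhood of `0`. -/
def SmoothGerm {E F : Type*} [NormedAddCommGroup E] [NormedSpace ℝ E]
    [NormedAddCommGroup F] [NormedSpace ℝ F] (f : E → F) : Prop :=
  ∃ U ∈ 𝓝 (0 : E), ContDiffOn ℝ (⊤ : ℕ∞) f U

/-- The standard symplectic form `ω₀ = Σᵢ dpᵢ∧dqᵢ` on `ℝ^{2n}` as a constant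
alternating bilinear form. -/
def omega0 (n : ℕ) (u v : PQ n) : ℝ := ∑ i : Fin n, (u.1 i * v.2 i - u.2 i * v.1 i)

/-- A local symplectomorphism of `ω₀`: `Ψ(0) = 0`, smooth near `0`, invertible
derivative, and `DΨ(z)` preserves `ω₀` for all `z` near `0`. -/
def IsLocalSymp (n : ℕ) (Ψ : PQ n → PQ n) : Prop :=
  Ψ 0 = 0 ∧ SmoothGerm Ψ ∧ Function.Bijective ⇑(fderiv ℝ Ψ 0) ∧
    ∀ᶠ z in 𝓝 (0 : PQ n), ∀ u v : PQ n,
      omega0 n (fderiv ℝ Ψ z u) (fderiv ℝ Ψ z v) = omega0 n u v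

/-- The `j`-th generator (0-indexed) of the list `q₁,p₁,q₂,p₂,…,qₙ,pₙ`. -/
def genFun (n j : ℕ) (z : PQ n) : ℝ :=
  if h : j / 2 < n then (if j % 2 = 0 then z.2 ⟨j / 2, h⟩ else z.1 ⟨j / 2, h⟩) else 0

/-- Membership (as germs at `0`) in the ideal `I_k` generated by the first `k`
functions of the list `q₁,p₁,q₂,p₂,…,qₙ,pₙ`. -/
def InIdeal (n k : ℕ) (g : PQ n → ℝ) : Prop :=
  ∃ c : Fin k → (PQ n → ℝ), (∀ j, SmoothGerm (c j)) ∧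
    ∀ᶠ z in 𝓝 (0 : PQ n), g z = ∑ j : Fin k, c j z * genFun n j.1 z

/-! Differentiating `p₁ ∘ Ψ = p₁` shows that every `DΨ(z)` fixes `p₁`; a linear map preserving `ω₀`
and `p₁` fixes the vector `∂/∂q₁`, which is `ω₀`-dual to `-p₁`. Hence `Ψ - id` is constant along the
`q₁`-lines, and as `q₁ ∘ Ψ` vanishes on `{q₁ = 0}` this gives `q₁ ∘ Ψ = q₁`. By the same argument
`DΨ(z)` fixes `∂/∂p₁`, so the other components of `Ψ` are constant along the `(p₁, q₁)`-planes and
factor through `B = tail ∘ Ψ ∘ consZero`. The derivative of `B` is `DΨ` restricted to the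
`ω₀`-orthogonal complement of that plane, which `DΨ` preserves. -/

namespace PQ

variable {N : ℕ}

def p (i : Fin N) : PQ N →L[ℝ] ℝ := .proj i ∘L .fst ℝ _ _

def q (i : Fin N) : PQ N →L[ℝ] ℝ := .proj i ∘L .snd ℝ _ _

@[simp] lemma q_apply (i : Fin N) (z : PQ N) : q i z = z.2 i := rfl

def eP (N : ℕ) : PQ (N + 1) := (Pi.single 0 1, 0)

def eQ (N : ℕ) : PQ (N + 1) := (0, Pi.single 0 1)

def tail (N : ℕ) : PQ (N + 1) →L[ℝ] PQ N :=
  let t : (Fin (N + 1) → ℝ) →L[ℝ] (Fin N → ℝ) := .pi fun i => .proj i.succ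
  t.prodMap t

def consZero (N : ℕ) : PQ N →L[ℝ] PQ (N + 1) :=
  let c : (Fin N → ℝ) →L[ℝ] (Fin (N + 1) → ℝ) := .finCons 0 (.id ℝ _)
  c.prodMap c

lemma tail_apply (z : PQ (N + 1)) :
    tail N z = (fun i => z.1 i.succ, fun i => z.2 i.succ) := rfl

lemma consZero_apply (w : PQ N) :
    consZero N w = (Fin.cons 0 w.1, Fin.cons 0 w.2) := rfl

@[simp] lemma tail_consZero (w : PQ N) : tail N (consZero N w) = w := rfl

@[simp] lemma tail_eP : tail N (eP N) = 0 := by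
  ext i <;> simp [tail_apply, eP, Fin.succ_ne_zero]

@[simp] lemma tail_eQ : tail N (eQ N) = 0 := by
  ext i <;> simp [tail_apply, eQ, Fin.succ_ne_zero]

lemma sub_consZero_tail (z : PQ (N + 1)) :
    z - consZero N (tail N z) = z.1 0 • eP N + z.2 0 • eQ N := by
  ext i <;> cases i using Fin.cases <;> simp [tail_apply, consZero_apply, eP, eQ]

end PQ

open PQ

lemma omega0_sub_left {N : ℕ} (u u' v : PQ N) :
    omega0 N (u - u') v = omega0 N u v - omega0 N u' v := by
  simp only [omega0, ← Finset.sum_sub_distrib, Prod.fst_sub, Prod.snd_sub, Pi.sub_apply]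
  exact Finset.sum_congr rfl fun i _ => by ring

lemma eq_zero_of_forall_omega0_eq_zero {N : ℕ} {u : PQ N} (h : ∀ v, omega0 N u v = 0) :
    u = 0 := by
  have hsum : ∑ i, (u.1 i ^ 2 + u.2 i ^ 2) = 0 := by
    rw [← h (-u.2, u.1), omega0]
    exact Finset.sum_congr rfl fun i _ => by simp only [Pi.neg_apply]; ring
  have hi := (Finset.sum_eq_zero_iff_of_nonneg fun i _ => by positivity).1 hsum
  ext i <;> simp only [Prod.fst_zero, Prod.snd_zero, Pi.zero_apply] <;>
    nlinarith [hi i (Finset.mem_univ i), sq_nonneg (u.1 i), sq_nonneg (u.2 i)]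

lemma omega0_eP_left {N : ℕ} (x : PQ (N + 1)) : omega0 (N + 1) (eP N) x = x.2 0 := by
  simp [omega0, eP, Pi.single_apply]

lemma omega0_eQ_left {N : ℕ} (x : PQ (N + 1)) : omega0 (N + 1) (eQ N) x = -x.1 0 := by
  simp [omega0, eQ, Pi.single_apply]

lemma omega0_eq_omega0_tail {N : ℕ} {x : PQ (N + 1)} (hp : x.1 0 = 0) (hq : x.2 0 = 0)
    (y : PQ (N + 1)) : omega0 (N + 1) x y = omega0 N (tail N x) (tail N y) := by
  simp [omega0, Fin.sum_univ_succ, hp, hq, tail_apply]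

def PreservesOmega0 (N : ℕ) (A : PQ N →L[ℝ] PQ N) : Prop :=
  ∀ u v, omega0 N (A u) (A v) = omega0 N u v

namespace PreservesOmega0

variable {N : ℕ}

section

variable {A : PQ N →L[ℝ] PQ N}

lemma injective (hA : PreservesOmega0 N A) : Function.Injective A := by
  refine (injective_iff_map_eq_zero A).2 fun u hu => eq_zero_of_forall_omega0_eq_zero fun v => ?_
  rw [← hA, hu]
  simp [omega0]

lemma bijective (hA : PreservesOmega0 N A) : Function.Bijective A :=
  ⟨hA.injective, LinearMap.surjective_of_injective (f := (A : PQ N →ₗ[ℝ] PQ N)) hA.injective⟩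

lemma apply_eq_self (hA : PreservesOmega0 N A) {e : PQ N}
    (he : ∀ v, omega0 N e (A v) = omega0 N e v) : A e = e := by
  refine sub_eq_zero.1 <| eq_zero_of_forall_omega0_eq_zero fun w => ?_
  obtain ⟨v, rfl⟩ := hA.bijective.2 w
  rw [omega0_sub_left, hA, he, sub_self]

end

variable {A : PQ (N + 1) →L[ℝ] PQ (N + 1)}

lemma apply_eP (hA : PreservesOmega0 (N + 1) A) (hq : ∀ v, (A v).2 0 = v.2 0) :
    A (eP N) = eP N :=
  hA.apply_eq_self fun v => by rw [omega0_eP_left, omega0_eP_left, hq]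

lemma apply_eQ (hA : PreservesOmega0 (N + 1) A) (hp : ∀ v, (A v).1 0 = v.1 0) :
    A (eQ N) = eQ N :=
  hA.apply_eq_self fun v => by rw [omega0_eQ_left, omega0_eQ_left, hp]

lemma tail_comp_consZero (hA : PreservesOmega0 (N + 1) A) (hp : ∀ v, (A v).1 0 = v.1 0)
    (hq : ∀ v, (A v).2 0 = v.2 0) : PreservesOmega0 N (tail N ∘L A ∘L consZero N) := by
  intro u v
  simp only [ContinuousLinearMap.comp_apply]
  rw [← omega0_eq_omega0_tail (x := A (consZero N u)) (by rw [hp]; rfl) (by rw [hq]; rfl), hA,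
    omega0_eq_omega0_tail (x := consZero N u) rfl rfl, tail_consZero, tail_consZero]

end PreservesOmega0

section Calculus

variable {E F : Type*} [NormedAddCommGroup E] [NormedSpace ℝ E]
  [NormedAddCommGroup F] [NormedSpace ℝ F]

lemma SmoothGerm.eventually_differentiableAt {f : E → F} (hf : SmoothGerm f) :
    ∀ᶠ z in 𝓝 0, DifferentiableAt ℝ f z := by
  obtain ⟨U, hU, hfU⟩ := hf
  filter_upwards [eventually_mem_nhds_iff.2 hU] with z hz
  exact (hfU.contDiffAt hz).differentiableAt (by simp)

lemma Convex.eq_of_fderiv_apply_eq_zero {s : Set E} (hs : Convex ℝ s) {f : E → F} {d : E}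
    (hf : ∀ y ∈ s, DifferentiableAt ℝ f y ∧ fderiv ℝ f y d = 0) {x : E} (hx : x ∈ s)
    (hxd : x + d ∈ s) : f (x + d) = f x := by
  have hderiv : ∀ t ∈ Set.Icc (0 : ℝ) 1, HasDerivAt (fun t : ℝ => f (x + t • d)) 0 t := by
    intro t ht
    obtain ⟨hdiff, hzero⟩ := hf _ (hs.add_smul_mem hx hxd ht)
    simpa [Function.comp_def, hzero] using
      hdiff.hasFDerivAt.comp_hasDerivAt t (((hasDerivAt_id t).smul_const d).const_add x)
  simpa using constant_of_has_deriv_right_zero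
    (fun t ht => (hderiv t ht).continuousAt.continuousWithinAt)
    (fun t ht => (hderiv t (Set.Ico_subset_Icc_self ht)).hasDerivWithinAt) 1
    (Set.right_mem_Icc.2 zero_le_one)

lemma eventually_eq_comp_of_fderiv_apply_sub_eq_zero {f : E → F} (L : E →L[ℝ] E)
    (hf : ∀ᶠ y in 𝓝 0, DifferentiableAt ℝ f y ∧ ∀ v, fderiv ℝ f y (v - L v) = 0) :
    ∀ᶠ z in 𝓝 0, f z = f (L z) := by
  obtain ⟨r, hr, hball⟩ := Metric.eventually_nhds_iff_ball.1 hf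
  have hL : ∀ᶠ z in 𝓝 (0 : E), L z ∈ Metric.ball 0 r :=
    (L.continuous.tendsto' 0 0 (map_zero L)).eventually (Metric.ball_mem_nhds 0 hr)
  filter_upwards [hL, Metric.ball_mem_nhds 0 hr] with z hLz hz
  simpa using (convex_ball 0 r).eq_of_fderiv_apply_eq_zero
    (fun y hy => ⟨(hball y hy).1, (hball y hy).2 z⟩) hLz (by simpa using hz)

lemma eventually_fderiv_apply_eq_of_clm_comp_eq {f : E → E} (ℓ : E →L[ℝ] F) {x : E}
    (hf : ∀ᶠ z in 𝓝 x, DifferentiableAt ℝ f z) (h : ∀ᶠ z in 𝓝 x, ℓ (f z) = ℓ z) :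
    ∀ᶠ z in 𝓝 x, ∀ v, ℓ (fderiv ℝ f z v) = ℓ v := by
  filter_upwards [hf, h.eventually_nhds] with z hfz hz v
  have hℓ : HasFDerivAt ℓ (ℓ ∘L fderiv ℝ f z) z :=
    (ℓ.hasFDerivAt.comp z hfz.hasFDerivAt).congr_of_eventuallyEq (hz.mono fun _ => Eq.symm)
  exact congrArg (· v) (hℓ.unique ℓ.hasFDerivAt)

end Calculus

lemma InIdeal.eventually_eq_zero_of_q_eq_zero {N : ℕ} {g : PQ (N + 1) → ℝ}
    (hg : InIdeal (N + 1) 1 g) : ∀ᶠ z in 𝓝 0, z.2 0 = 0 → g z = 0 := by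
  obtain ⟨c, -, hc⟩ := hg
  filter_upwards [hc] with z hz hz0
  simp [hz, genFun, hz0]

section Isotropy

variable {n : ℕ} {Ψ : PQ (n + 1) → PQ (n + 1)}

lemma eventually_q_comp_eq (hdiff : ∀ᶠ z in 𝓝 0, DifferentiableAt ℝ Ψ z)
    (heQ : ∀ᶠ z in 𝓝 0, fderiv ℝ Ψ z (eQ n) = eQ n)
    (hvanish : ∀ᶠ z in 𝓝 0, z.2 0 = 0 → (Ψ z).2 0 = 0) :
    ∀ᶠ z in 𝓝 0, (Ψ z).2 0 = z.2 0 := by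
  let Q : PQ (n + 1) →L[ℝ] PQ (n + 1) := .id ℝ _ - (q 0).smulRight (eQ n)
  have hQ : ∀ z, (Q z).2 0 = 0 := by simp [Q, eQ]
  have hconst : ∀ᶠ z in 𝓝 0, Ψ z - z = Ψ (Q z) - Q z := by
    refine eventually_eq_comp_of_fderiv_apply_sub_eq_zero Q ?_
    filter_upwards [hdiff, heQ] with y hy hyQ
    refine ⟨hy.sub differentiableAt_id, fun v => ?_⟩
    rw [fderiv_fun_sub hy differentiableAt_fun_id, fderiv_fun_id]
    simp [Q, hyQ]
  have hvanishQ : ∀ᶠ z in 𝓝 0, (Ψ (Q z)).2 0 = 0 :=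
    ((Q.continuous.tendsto' 0 0 (map_zero Q)).eventually hvanish).mono fun z hz => hz (hQ z)
  filter_upwards [hconst, hvanishQ] with z hz hzQ
  simpa [hQ, hzQ, sub_eq_zero] using congrArg (fun w : PQ (n + 1) => w.2 0) hz

lemma eventually_tail_comp_eq (hdiff : ∀ᶠ z in 𝓝 0, DifferentiableAt ℝ Ψ z)
    (heP : ∀ᶠ z in 𝓝 0, fderiv ℝ Ψ z (eP n) = eP n)
    (heQ : ∀ᶠ z in 𝓝 0, fderiv ℝ Ψ z (eQ n) = eQ n) :
    ∀ᶠ z in 𝓝 0, tail n (Ψ z) = tail n (Ψ (consZero n (tail n z))) := by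
  refine eventually_eq_comp_of_fderiv_apply_sub_eq_zero (f := fun z => tail n (Ψ z))
    (consZero n ∘L tail n) ?_
  filter_upwards [hdiff, heP, heQ] with y hy hyP hyQ
  refine ⟨(tail n).differentiableAt.comp y hy, fun v => ?_⟩
  rw [fderiv_fun_comp y (tail n).differentiableAt hy, ContinuousLinearMap.fderiv]
  simp [sub_consZero_tail, hyP, hyQ]

lemma isLocalSymp_tail_comp_consZero (h0 : Ψ 0 = 0) (hsmooth : SmoothGerm Ψ)
    (hsymp : ∀ᶠ z in 𝓝 0, PreservesOmega0 (n + 1) (fderiv ℝ Ψ z))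
    (hp : ∀ᶠ z in 𝓝 0, ∀ v, (fderiv ℝ Ψ z v).1 0 = v.1 0)
    (hq : ∀ᶠ z in 𝓝 0, ∀ v, (fderiv ℝ Ψ z v).2 0 = v.2 0) :
    IsLocalSymp n (fun w => tail n (Ψ (consZero n w))) := by
  have hι := (consZero n).continuous.tendsto' 0 0 (map_zero _)
  have hB : ∀ᶠ w in 𝓝 0,
      PreservesOmega0 n (fderiv ℝ (fun w => tail n (Ψ (consZero n w))) w) := by
    filter_upwards [hι.eventually (hsmooth.eventually_differentiableAt.and (hsymp.and (hp.and hq)))]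
      with w ⟨hd, hs, hpw, hqw⟩
    have hBw : HasFDerivAt (fun w => tail n (Ψ (consZero n w)))
        (tail n ∘L fderiv ℝ Ψ (consZero n w) ∘L consZero n) w :=
      (tail n).hasFDerivAt.comp w (hd.hasFDerivAt.comp w (consZero n).hasFDerivAt)
    rw [hBw.fderiv]
    exact hs.tail_comp_consZero hpw hqw
  obtain ⟨U, hU, hΨU⟩ := hsmooth
  refine ⟨by simp [h0], ⟨consZero n ⁻¹' U, hι hU, ?_⟩, hB.self_of_nhds.bijective, hB⟩
  exact (tail n).contDiff.comp_contDiffOn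
    (hΨU.comp (consZero n).contDiff.contDiffOn (Set.mapsTo_preimage _ _))

end Isotropy

/-- Lemma 2 of the paper: any local symplectomorphism of `ω₀` on
`ℝ^{2(n+1)}` preserving `p₁` and the ideal `⟨q₁⟩` preserves `q₁`, its remaining
components are independent of `(p₁, q₁)`, and they define a local
symplectomorphism `B` of the restricted symplectic form on `ℝ^{2n}`. -/
theorem isotropy_of_nonsingular_pair (n : ℕ) (Ψ : PQ (n + 1) → PQ (n + 1))
    (hΨ : IsLocalSymp (n + 1) Ψ)
    (hp1 : ∀ᶠ z in 𝓝 (0 : PQ (n + 1)), (Ψ z).1 0 = z.1 0)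
    (hq1 : InIdeal (n + 1) 1 (fun z => (Ψ z).2 0)) :
    (∀ᶠ z in 𝓝 (0 : PQ (n + 1)), (Ψ z).2 0 = z.2 0) ∧
      ∃ B : PQ n → PQ n, IsLocalSymp n B ∧
        ∀ᶠ z in 𝓝 (0 : PQ (n + 1)), ∀ i : Fin n,
          (Ψ z).1 i.succ = (B ((fun j => z.1 j.succ, fun j => z.2 j.succ) : PQ n)).1 i ∧
          (Ψ z).2 i.succ = (B ((fun j => z.1 j.succ, fun j => z.2 j.succ) : PQ n)).2 i := by
  obtain ⟨hΨ0, hsmooth, -, hsymp⟩ := hΨ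
  have hdiff := hsmooth.eventually_differentiableAt
  have hDp := eventually_fderiv_apply_eq_of_clm_comp_eq (p 0) hdiff hp1
  have heQ : ∀ᶠ z in 𝓝 0, fderiv ℝ Ψ z (eQ n) = eQ n := by
    filter_upwards [hsymp, hDp] with z hz hpz using PreservesOmega0.apply_eQ hz hpz
  have hq := eventually_q_comp_eq hdiff heQ hq1.eventually_eq_zero_of_q_eq_zero
  have hDq := eventually_fderiv_apply_eq_of_clm_comp_eq (q 0) hdiff hq
  have heP : ∀ᶠ z in 𝓝 0, fderiv ℝ Ψ z (eP n) = eP n := by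
    filter_upwards [hsymp, hDq] with z hz hqz using PreservesOmega0.apply_eP hz hqz
  refine ⟨hq, _, isLocalSymp_tail_comp_consZero hΨ0 hsmooth hsymp hDp hDq, ?_⟩
  filter_upwards [eventually_tail_comp_eq hdiff heP heQ] with z hz i
  exact ⟨congrFun (congrArg Prod.fst hz) i, congrFun (congrArg Prod.snd hz) i⟩
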